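/- arXiv:2310.08566 — 2 statements merged into one kernel-verified Lean document; each statement's English description precedes it below -/
import Mathlib

section
/- For any m ≥ 1 and κ ≥ 1, if m ≥ (κ^{1/4}/4 + 1)·max{⌈log(2√Λ/ε)⌉, ⌈log(2√λ/ε + 1)⌉} then 2·max{√Λ·(1 + 2/κ^{1/4})^{-(2m+1)}, √λ·((1 + 2/κ^{1/4})^{2m+1} - 1)^{-1}} ≤ ε, for any 0 < ε < 1 and 0 < λ ≤ Λ with κ = Λ/λ. -/
/-!
With `t = κ^{1/4}`, the elementary bound `exp (t/2 + 1)⁻¹ ≤ 1 + 2/t` (a form of `(1 + 1/x)^{x+1} ≥ e`)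
gives `(1 + 2/t)^{2m+1} ≥ exp M` whenever `M (t/2 + 1) ≤ 2m + 1`, and the hypothesis on `m` provides
this for `M` the maximum of the two ceilings. Then `(1 + 2/t)^{2m+1}` dominates both `2√Λ/ε` and
`2√λ/ε + 1`, which is exactly what makes each of the two error terms at most `ε/2`.
-/

open Real

lemma exp_inv_half_add_one_le {t : ℝ} (ht : 0 < t) : exp (t / 2 + 1)⁻¹ ≤ 1 + 2 / t := by
  calc exp (t / 2 + 1)⁻¹ ≤ 1 / (1 - (t / 2 + 1)⁻¹) :=
        exp_bound_div_one_sub_of_interval (by positivity) (inv_lt_one_of_one_lt₀ (by linarith))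
    _ = 1 + 2 / t := by field_simp [ht.ne']; ring

lemma exp_le_one_add_two_div_pow {t M : ℝ} (n : ℕ) (ht : 0 < t) (hM : M * (t / 2 + 1) ≤ n) :
    exp M ≤ (1 + 2 / t) ^ n := by
  have hMn : M ≤ n * (t / 2 + 1)⁻¹ := by
    rw [← div_eq_mul_inv, le_div_iff₀ (by positivity)]
    exact hM
  calc exp M ≤ exp (n * (t / 2 + 1)⁻¹) := exp_le_exp.2 hMn
    _ = exp (t / 2 + 1)⁻¹ ^ n := exp_nat_mul _ n
    _ ≤ (1 + 2 / t) ^ n := pow_le_pow_left₀ (exp_pos _).le (exp_inv_half_add_one_le ht) n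

lemma le_exp_of_ceil_log_le {x M : ℝ} (hx : 0 < x) (h : (⌈log x⌉ : ℝ) ≤ M) : x ≤ exp M :=
  (log_le_iff_le_exp hx).1 ((Int.le_ceil _).trans h)

lemma two_mul_mul_inv_le {a B ε : ℝ} (ha : 0 < a) (hε : 0 < ε) (h : 2 * a / ε ≤ B) :
    2 * (a * B⁻¹) ≤ ε := by
  have hB : 0 < B := (by positivity : 0 < 2 * a / ε).trans_le h
  rw [← mul_assoc, ← div_eq_mul_inv, div_le_iff₀ hB, ← div_le_iff₀' hε]
  exact h

theorem pade_terms_sufficient_general (m : ℕ) (ε lam Lam : ℝ)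
    (hε : 0 < ε) (hlam : 0 < lam) (hlamLam : lam ≤ Lam)
    (hmlarge : ((Lam / lam) ^ ((1 : ℝ) / 4) / 4 + 1) *
        max (⌈Real.log (2 * Real.sqrt Lam / ε)⌉ : ℝ)
          (⌈Real.log (2 * Real.sqrt lam / ε + 1)⌉ : ℝ) ≤ (m : ℝ)) :
    2 * max (Real.sqrt Lam * ((1 + 2 / (Lam / lam) ^ ((1 : ℝ) / 4)) ^ (2 * m + 1))⁻¹)
        (Real.sqrt lam * ((1 + 2 / (Lam / lam) ^ ((1 : ℝ) / 4)) ^ (2 * m + 1) - 1)⁻¹) ≤ ε := by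
  have hLam : 0 < Lam := hlam.trans_le hlamLam
  set t := (Lam / lam) ^ ((1 : ℝ) / 4)
  set M := max (⌈log (2 * √Lam / ε)⌉ : ℝ) (⌈log (2 * √lam / ε + 1)⌉ : ℝ)
  have ht : 0 < t := rpow_pos_of_pos (div_pos hLam hlam) _
  have hM : 0 ≤ M := le_max_of_le_right <| Int.cast_nonneg <| Int.ceil_nonneg <|
    (log_pos (by simp only [lt_add_iff_pos_left]; positivity)).le
  have hpow : exp M ≤ (1 + 2 / t) ^ (2 * m + 1) :=
    exp_le_one_add_two_div_pow _ ht (by push_cast; nlinarith)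
  have hLamB : 2 * √Lam / ε ≤ (1 + 2 / t) ^ (2 * m + 1) :=
    (le_exp_of_ceil_log_le (by positivity) (le_max_left _ _)).trans hpow
  have hlamB : 2 * √lam / ε + 1 ≤ (1 + 2 / t) ^ (2 * m + 1) :=
    (le_exp_of_ceil_log_le (by positivity) (le_max_right _ _)).trans hpow
  rw [mul_max_of_nonneg _ _ zero_le_two]
  exact max_le (two_mul_mul_inv_le (sqrt_pos.2 hLam) hε hLamB)
    (two_mul_mul_inv_le (sqrt_pos.2 hlam) hε (by linarith))

/-- Sufficient number of Padé terms for an `ε`-accurate matrix square root: if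
`m ≥ (κ^{1/4}/4 + 1) · max{⌈log(2√Λ/ε)⌉, ⌈log(2√λ/ε + 1)⌉}` with `κ = Λ/λ`, then the
Padé error bound is at most `ε`. -/
theorem pade_terms_sufficient (m : ℕ) (hm : 1 ≤ m) (ε lam Lam : ℝ)
    (hε : 0 < ε) (hε1 : ε < 1) (hlam : 0 < lam) (hlamLam : lam ≤ Lam)
    (hmlarge : ((Lam / lam) ^ ((1 : ℝ) / 4) / 4 + 1) *
        max (⌈Real.log (2 * Real.sqrt Lam / ε)⌉ : ℝ)
          (⌈Real.log (2 * Real.sqrt lam / ε + 1)⌉ : ℝ) ≤ (m : ℝ)) :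
    2 * max (Real.sqrt Lam * ((1 + 2 / (Lam / lam) ^ ((1 : ℝ) / 4)) ^ (2 * m + 1))⁻¹)
        (Real.sqrt lam * ((1 + 2 / (Lam / lam) ^ ((1 : ℝ) / 4)) ^ (2 * m + 1) - 1)⁻¹) ≤ ε :=
  pade_terms_sufficient_general m ε lam Lam hε hlam hlamLam hmlarge
end

section
/- Let z ∼ N(0, I_d) be standard Gaussian in R^d, let x_k, x_j, x_j' ∈ R^d with ||x_k - x_j'||_2 ≥ η > 0, and let y ∈ R. Then P(⟨x_j - x_j', z⟩ ≥ ⟨x_k - x_j', z⟩ + y ≥ 0) + P(⟨x_j - x_j', z⟩ ≤ ⟨x_k - x_j', z⟩ + y ≤ 0) ≤ 2||x_j - x_j'||_2·√(2log(2/δ))/(√(2π)·η) + δ for any δ ∈ (0,1). -/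
/-!
Write `a = x_k - x_j'`, `b = x_j - x_j'`, `s = √(2 log (2/δ))` and `t = ‖b‖ s`. On the first
event, either `⟨b, z⟩ > t`, or `⟨a, z⟩ + y` lies in the interval `[0, t]`. Since
`⟨a, z⟩ ∼ N(0, ‖a‖²)` has density at most `1 / (√(2π) ‖a‖) ≤ 1 / (√(2π) η)`, the second case has
probability at most `t / (√(2π) η)`, while the Gaussian Chernoff bound gives
`P(⟨b, z⟩ > ‖b‖ s) ≤ exp (-s² / 2) = δ / 2`. The second event is the first one for
`(-a, -b, -y)`.
-/

open MeasureTheory ProbabilityTheory Real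

/-- The Euclidean norm of a vector in `Fin d → ℝ`. -/
noncomputable def l2norm {d : ℕ} (v : Fin d → ℝ) : ℝ := Real.sqrt (∑ i, v i ^ 2)

open scoped NNReal ENNReal
open Set WithLp

lemma hasSubgaussianMGF_id_gaussianReal (v : ℝ≥0) : HasSubgaussianMGF id v (gaussianReal 0 v) :=
  ⟨integrable_exp_mul_gaussianReal, fun t => by simp [mgf_id_gaussianReal]⟩

lemma gaussianReal_Ioi_le (σ : ℝ≥0) {s : ℝ} (hs : 0 ≤ s) :
    gaussianReal 0 (σ ^ 2) (Ioi (σ * s)) ≤ ENNReal.ofReal (exp (-s ^ 2 / 2)) := by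
  rcases eq_or_ne σ 0 with rfl | hσ
  · simp [gaussianReal_zero_var]
  have hσ' : (σ : ℝ) ≠ 0 := by exact_mod_cast hσ
  calc gaussianReal 0 (σ ^ 2) (Ioi (σ * s))
      ≤ gaussianReal 0 (σ ^ 2) {x | σ * s ≤ id x} := measure_mono Ioi_subset_Ici_self
    _ = ENNReal.ofReal ((gaussianReal 0 (σ ^ 2)).real {x | σ * s ≤ id x}) := by
        rw [ofReal_measureReal]
    _ ≤ ENNReal.ofReal (exp (-s ^ 2 / 2)) := by
        refine ENNReal.ofReal_le_ofReal (((hasSubgaussianMGF_id_gaussianReal _).measure_ge_le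
          (by positivity)).trans_eq ?_)
        congr 1
        push_cast
        field_simp

lemma gaussianPDFReal_le (μ : ℝ) (v : ℝ≥0) (x : ℝ) :
    gaussianPDFReal μ v x ≤ (√(2 * π * v))⁻¹ := by
  rw [gaussianPDFReal]
  refine mul_le_of_le_one_right (by positivity) (exp_le_one_iff.mpr ?_)
  exact div_nonpos_of_nonpos_of_nonneg (neg_nonpos.2 (sq_nonneg _)) (by positivity)

lemma gaussianReal_Icc_le (μ : ℝ) {v : ℝ≥0} (hv : v ≠ 0) (p q : ℝ) :
    gaussianReal μ v (Icc p q) ≤ ENNReal.ofReal ((q - p) / √(2 * π * v)) := by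
  rw [gaussianReal_apply μ hv]
  calc ∫⁻ x in Icc p q, gaussianPDF μ v x
      ≤ ∫⁻ x in Icc p q, ENNReal.ofReal (√(2 * π * v))⁻¹ :=
        lintegral_mono fun x => ENNReal.ofReal_le_ofReal (gaussianPDFReal_le μ v x)
    _ = _ := by
        rw [setLIntegral_const, Real.volume_Icc, ← ENNReal.ofReal_mul (by positivity),
          div_eq_mul_inv, mul_comm]

section DotProduct

variable {ι : Type*} [Fintype ι]

lemma measurable_dotProduct_right (a : ι → ℝ) : Measurable (a ⬝ᵥ · : (ι → ℝ) → ℝ) := by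
  unfold dotProduct
  fun_prop

lemma map_pi_gaussianReal_dotProduct (a : ι → ℝ) :
    (Measure.pi fun _ : ι => gaussianReal 0 1).map (a ⬝ᵥ ·)
      = gaussianReal 0 (‖toLp 2 a‖₊ ^ 2) := by
  have hinner : (a ⬝ᵥ ·) = innerSL ℝ (toLp 2 a : EuclideanSpace ℝ ι) ∘ toLp 2 := by
    ext z
    simp [dotProduct, PiLp.inner_apply, mul_comm]
  rw [hinner, ← Measure.map_map (by fun_prop) (by fun_prop), map_pi_eq_stdGaussian,
    IsGaussian.map_eq_gaussianReal, integral_strongDual_stdGaussian, variance_dual_stdGaussian,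
    innerSL_apply_norm]
  congr
  ext
  simp

lemma measure_dotProduct_sandwich_le (a b : ι → ℝ) (y : ℝ) {η s : ℝ} (hη : 0 < η)
    (hsep : η ≤ ‖toLp 2 a‖) (hs : 0 ≤ s) :
    Measure.pi (fun _ : ι => gaussianReal 0 1) {z | a ⬝ᵥ z + y ≤ b ⬝ᵥ z ∧ 0 ≤ a ⬝ᵥ z + y}
      ≤ ENNReal.ofReal (‖toLp 2 b‖ * s / (√(2 * π) * η)) + ENNReal.ofReal (exp (-s ^ 2 / 2)) := by
  set μ := Measure.pi (fun _ : ι => gaussianReal 0 1)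
  set t := ‖toLp 2 b‖ * s
  have hsplit : {z | a ⬝ᵥ z + y ≤ b ⬝ᵥ z ∧ 0 ≤ a ⬝ᵥ z + y}
      ⊆ (a ⬝ᵥ ·) ⁻¹' Icc (-y) (t - y) ∪ (b ⬝ᵥ ·) ⁻¹' Ioi t := by
    intro z ⟨hle, hnonneg⟩
    by_cases hb : b ⬝ᵥ z ≤ t
    · exact Or.inl ⟨by linarith, by linarith⟩
    · exact Or.inr (not_le.mp hb)
  have ha : ‖toLp 2 a‖₊ ^ 2 ≠ 0 :=
    pow_ne_zero _ (by rw [← NNReal.coe_ne_zero, coe_nnnorm]; linarith)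
  have hinterval : μ ((a ⬝ᵥ ·) ⁻¹' Icc (-y) (t - y)) ≤ ENNReal.ofReal (t / (√(2 * π) * η)) := by
    rw [← Measure.map_apply (measurable_dotProduct_right a) measurableSet_Icc,
      map_pi_gaussianReal_dotProduct]
    refine (gaussianReal_Icc_le 0 ha _ _).trans (ENNReal.ofReal_le_ofReal ?_)
    rw [sub_neg_eq_add, sub_add_cancel]
    push_cast
    rw [sqrt_mul (by positivity), sqrt_sq (norm_nonneg _)]
    gcongr
  have htail : μ ((b ⬝ᵥ ·) ⁻¹' Ioi t) ≤ ENNReal.ofReal (exp (-s ^ 2 / 2)) := by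
    rw [← Measure.map_apply (measurable_dotProduct_right b) measurableSet_Ioi,
      map_pi_gaussianReal_dotProduct]
    exact gaussianReal_Ioi_le _ hs
  exact (measure_mono hsplit).trans ((measure_union_le _ _).trans (add_le_add hinterval htail))

end DotProduct

lemma l2norm_eq_norm_toLp {d : ℕ} (v : Fin d → ℝ) : l2norm v = ‖toLp 2 v‖ := by
  simp [l2norm, EuclideanSpace.norm_eq]

/-- Anti-concentration bound for a standard Gaussian `z ∼ N(0, I_d)`: if
`‖x_k - x_j'‖₂ ≥ η > 0`, then the probability that `⟨x_k - x_j', z⟩ + y` lies between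
`0` and `⟨x_j - x_j', z⟩` (on either side) is at most
`2‖x_j - x_j'‖₂ √(2 log(2/δ)) / (√(2π) η) + δ`. -/
theorem gaussian_sandwich_prob_bound {d : ℕ} (xk xj xj' : Fin d → ℝ) (y η δ : ℝ)
    (hη : 0 < η) (hsep : η ≤ l2norm (fun i => xk i - xj' i))
    (hδ : 0 < δ) (hδ1 : δ < 1) :
    (Measure.pi (fun _ : Fin d => gaussianReal 0 1))
        {z | (∑ i, (xk i - xj' i) * z i) + y ≤ ∑ i, (xj i - xj' i) * z i ∧
             0 ≤ (∑ i, (xk i - xj' i) * z i) + y} +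
      (Measure.pi (fun _ : Fin d => gaussianReal 0 1))
        {z | ∑ i, (xj i - xj' i) * z i ≤ (∑ i, (xk i - xj' i) * z i) + y ∧
             (∑ i, (xk i - xj' i) * z i) + y ≤ 0} ≤
      ENNReal.ofReal
        (2 * l2norm (fun i => xj i - xj' i) * Real.sqrt (2 * Real.log (2 / δ)) /
            (Real.sqrt (2 * π) * η) + δ) := by
  set a := xk - xj'
  set b := xj - xj'
  set s := √(2 * log (2 / δ))
  have hs : 0 ≤ s := sqrt_nonneg _
  have hlog : 0 ≤ log (2 / δ) := log_nonneg ((le_div_iff₀ hδ).2 (by linarith))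
  have hexp : exp (-s ^ 2 / 2) = δ / 2 := by
    rw [sq_sqrt (by positivity), neg_div, mul_div_cancel_left₀ _ two_ne_zero, exp_neg,
      exp_log (by positivity), inv_div]
  have hneg : {z | b ⬝ᵥ z ≤ a ⬝ᵥ z + y ∧ a ⬝ᵥ z + y ≤ 0}
      = {z | (-a) ⬝ᵥ z + -y ≤ (-b) ⬝ᵥ z ∧ 0 ≤ (-a) ⬝ᵥ z + -y} := by
    ext z
    simp only [mem_ofPred_eq, neg_dotProduct]
    constructor <;> rintro ⟨h₁, h₂⟩ <;> constructor <;> linarith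
  have hsep' : η ≤ ‖toLp 2 a‖ := by rwa [← l2norm_eq_norm_toLp]
  have h₁ := measure_dotProduct_sandwich_le a b y hη hsep' hs
  have h₂ := measure_dotProduct_sandwich_le (-a) (-b) (-y) hη (by rwa [toLp_neg, norm_neg]) hs
  rw [toLp_neg, norm_neg, ← hneg] at h₂
  rw [hexp, ← l2norm_eq_norm_toLp] at h₁ h₂
  have hT : 0 ≤ l2norm b * s / (√(2 * π) * η) := by unfold l2norm; positivity
  calc _ ≤ (ENNReal.ofReal (l2norm b * s / (√(2 * π) * η)) + ENNReal.ofReal (δ / 2))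
        + (ENNReal.ofReal (l2norm b * s / (√(2 * π) * η)) + ENNReal.ofReal (δ / 2)) :=
        add_le_add h₁ h₂
    _ = ENNReal.ofReal (2 * l2norm b * s / (√(2 * π) * η) + δ) := by
        rw [← ENNReal.ofReal_add hT (by positivity), ← ENNReal.ofReal_add (by positivity)
          (by positivity)]
        congr 1
        ring
end
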